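/- Let n ≥ 3 and let f = (f_0, …, f_n) be a non-degenerate symmetric signature of arity n. Then f ∈ 𝒜₃ if and only if there exist a matrix H ∈ O₂(ℂ) with det H = −1, a nonzero c ∈ ℂ, and r ∈ {0,1,2,3} such that f = c·((H(1,α))^{⊗n} + i^r·(H(1,−α))^{⊗n}). -/

import Mathlib

/-!
Composing `H` with the reflection `R = diag(1, -1)` keeps it orthogonal, flips the sign of its
determinant and swaps `R(1, α) = (1, -α)` with `R(1, -α) = (1, α)`. Swapping the two summands of
`c ((H(1,α))^{⊗n} + i^r (H(1,-α))^{⊗n})` is undone by rescaling: it equals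
`c i^r ((H(1,-α))^{⊗n} + i^{-r} (H(1,α))^{⊗n})`. Since orthogonal matrices have determinant `±1`,
every witness of `f ∈ 𝒜₃` with determinant `1` yields one with determinant `-1`.
-/

/-- `α = (1 + i)/√2`, a primitive 8th root of unity with `α² = i`. -/
noncomputable def alpha : ℂ := (1 + Complex.I) / (Real.sqrt 2 : ℂ)

/-- `f ∈ 𝒜₃`: there exist `H ∈ O₂(ℂ)`, a nonzero `c ∈ ℂ`, and `r ∈ {0,1,2,3}` such that
`f = c ((H(1,α))^{⊗n} + i^r (H(1,-α))^{⊗n})`. -/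
def MemA3 (n : ℕ) (f : ℕ → ℂ) : Prop :=
  ∃ (H : Matrix (Fin 2) (Fin 2) ℂ) (c : ℂ) (r : ℕ),
    H.transpose * H = 1 ∧ c ≠ 0 ∧ r ≤ 3 ∧
    ∀ k ≤ n, f k =
      c * (H.mulVec ![1, alpha] 0 ^ (n - k) * H.mulVec ![1, alpha] 1 ^ k +
        Complex.I ^ r *
          (H.mulVec ![1, -alpha] 0 ^ (n - k) * H.mulVec ![1, -alpha] 1 ^ k))

open Matrix Complex

theorem Matrix.det_eq_one_or_neg_one_of_transpose_mul_self {m R : Type*} [Fintype m]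
    [DecidableEq m] [CommRing R] [NoZeroDivisors R] {H : Matrix m m R} (hH : Hᵀ * H = 1) :
    H.det = 1 ∨ H.det = -1 := by
  have h := congrArg det hH
  rw [det_mul, det_transpose, det_one] at h
  exact mul_self_eq_one_iff.mp h

theorem Matrix.transpose_mul_self_mul {m R : Type*} [Fintype m] [DecidableEq m] [CommRing R]
    {A B : Matrix m m R} (hA : Aᵀ * A = 1) (hB : Bᵀ * B = 1) : (A * B)ᵀ * (A * B) = 1 := by
  rw [transpose_mul, Matrix.mul_assoc, ← Matrix.mul_assoc Aᵀ, hA, Matrix.one_mul, hB]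

section Reflection

variable {R : Type*} [CommRing R]

theorem reflection_transpose_mul_self :
    (!![1, 0; 0, -1] : Matrix (Fin 2) (Fin 2) R)ᵀ * !![1, 0; 0, -1] = 1 := by
  ext i j
  fin_cases i <;> fin_cases j <;> simp [mul_apply, Fin.sum_univ_two, one_apply]

theorem det_reflection : (!![1, 0; 0, -1] : Matrix (Fin 2) (Fin 2) R).det = -1 := by
  simp [det_fin_two_of]

theorem reflection_mulVec (a b : R) :
    (!![1, 0; 0, -1] : Matrix (Fin 2) (Fin 2) R) *ᵥ ![a, b] = ![a, -b] := by
  ext i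
  fin_cases i <;> simp [mulVec, dotProduct, Fin.sum_univ_two]

end Reflection

theorem I_pow_mul_I_pow_sub_mod_four {r : ℕ} (hr : r ≤ 3) : I ^ r * I ^ ((4 - r) % 4) = 1 := by
  interval_cases r <;> simp [pow_succ]

theorem signature_mul_reflection {n : ℕ} {f : ℕ → ℂ} {H : Matrix (Fin 2) (Fin 2) ℂ} {c : ℂ}
    {r : ℕ} (hr : r ≤ 3)
    (hf : ∀ k ≤ n, f k =
      c * ((H *ᵥ ![1, alpha]) 0 ^ (n - k) * (H *ᵥ ![1, alpha]) 1 ^ k +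
        I ^ r * ((H *ᵥ ![1, -alpha]) 0 ^ (n - k) * (H *ᵥ ![1, -alpha]) 1 ^ k)))
    (k : ℕ) (hk : k ≤ n) :
    f k = c * I ^ r *
      (((H * !![1, 0; 0, -1]) *ᵥ ![1, alpha]) 0 ^ (n - k) *
          ((H * !![1, 0; 0, -1]) *ᵥ ![1, alpha]) 1 ^ k +
        I ^ ((4 - r) % 4) *
          (((H * !![1, 0; 0, -1]) *ᵥ ![1, -alpha]) 0 ^ (n - k) *
            ((H * !![1, 0; 0, -1]) *ᵥ ![1, -alpha]) 1 ^ k)) := by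
  have hswap (a : ℂ) : (H * !![1, 0; 0, -1]) *ᵥ ![1, a] = H *ᵥ ![1, -a] := by
    rw [← mulVec_mulVec, reflection_mulVec]
  rw [hswap, hswap, neg_neg, hf k hk]
  linear_combination (-(c * (H *ᵥ ![1, alpha]) 0 ^ (n - k) * (H *ᵥ ![1, alpha]) 1 ^ k)) *
    I_pow_mul_I_pow_sub_mod_four hr

theorem stmt_12_general (n : ℕ) (f : ℕ → ℂ) :
    MemA3 n f ↔
      ∃ (H : Matrix (Fin 2) (Fin 2) ℂ) (c : ℂ) (r : ℕ),
        H.transpose * H = 1 ∧ H.det = -1 ∧ c ≠ 0 ∧ r ≤ 3 ∧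
        ∀ k ≤ n, f k =
          c * (H.mulVec ![1, alpha] 0 ^ (n - k) * H.mulVec ![1, alpha] 1 ^ k +
            Complex.I ^ r *
              (H.mulVec ![1, -alpha] 0 ^ (n - k) * H.mulVec ![1, -alpha] 1 ^ k)) := by
  constructor
  · rintro ⟨H, c, r, hH, hc, hr, hf⟩
    rcases det_eq_one_or_neg_one_of_transpose_mul_self hH with hdet | hdet
    · refine ⟨H * !![1, 0; 0, -1], c * I ^ r, (4 - r) % 4,
        transpose_mul_self_mul hH reflection_transpose_mul_self, ?_,
        mul_ne_zero hc (pow_ne_zero _ I_ne_zero), by omega, signature_mul_reflection hr hf⟩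
      rw [det_mul, hdet, det_reflection, one_mul]
    · exact ⟨H, c, r, hH, hdet, hc, hr, hf⟩
  · rintro ⟨H, c, r, hH, -, hc, hr, hf⟩
    exact ⟨H, c, r, hH, hc, hr, hf⟩

/-- For a non-degenerate symmetric signature `f` of arity `n ≥ 3`, `f ∈ 𝒜₃` iff the
defining transformation may be chosen in `O₂(ℂ) − SO₂(ℂ)`, i.e. with determinant `−1`. -/
theorem stmt_12 (n : ℕ) (hn : 3 ≤ n) (f : ℕ → ℂ)
    (hnd : ¬ ∃ a b : ℂ, ∀ k ≤ n, f k = a ^ (n - k) * b ^ k) :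
    MemA3 n f ↔
      ∃ (H : Matrix (Fin 2) (Fin 2) ℂ) (c : ℂ) (r : ℕ),
        H.transpose * H = 1 ∧ H.det = -1 ∧ c ≠ 0 ∧ r ≤ 3 ∧
        ∀ k ≤ n, f k =
          c * (H.mulVec ![1, alpha] 0 ^ (n - k) * H.mulVec ![1, alpha] 1 ^ k +
            Complex.I ^ r *
              (H.mulVec ![1, -alpha] 0 ^ (n - k) * H.mulVec ![1, -alpha] 1 ^ k)) :=
  stmt_12_general n f
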